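/- Let W : ℝ^{d×d} → ℝ ∪ {∞} and let V be lower semicontinuous polyconvex with V ≤ W. Define V_iso(F) := sup over R₁, R₂ ∈ SO(d) of V(R₁ F R₂). If W is isotropic, then V_iso is isotropic, V ≤ V_iso ≤ W, and V_iso is a supremum of lower semicontinuous convex functions composed with the minors map, hence again lower semicontinuous polyconvex. -/

import Mathlib

open Matrix

noncomputable section

abbrev Mat (d : ℕ) := Matrix (Fin d) (Fin d) ℝ

def SO (d : ℕ) : Set (Mat d) := {R | R * Rᵀ = 1 ∧ R.det = 1}

def Isotropic {d : ℕ} {α : Type*} (W : Mat d → α) : Prop :=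
  ∀ (F R₁ R₂ : Mat d), R₁ ∈ SO d → R₂ ∈ SO d → W (R₁ * F * R₂) = W F

/-- Convexity for extended-real-valued functions. -/
def ConvexE {V : Type*} [AddCommGroup V] [Module ℝ V] (g : V → EReal) : Prop :=
  ∀ (x y : V) (a b : ℝ), 0 ≤ a → 0 ≤ b → a + b = 1 →
    g (a • x + b • y) ≤ (a : EReal) * g x + (b : EReal) * g y

/-- The minors map for `d = 2`: `𝓜(F) = (F, det F) ∈ ℝ⁵`. -/
def M2 (F : Mat 2) : Fin 5 → ℝ := ![F 0 0, F 0 1, F 1 0, F 1 1, F.det]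

/-- `V` is lower semicontinuous polyconvex: `V = G ∘ 𝓜` with `G` convex and lsc. -/
def LscPolyconvex (V : Mat 2 → EReal) : Prop :=
  ∃ G : (Fin 5 → ℝ) → EReal, ConvexE G ∧ LowerSemicontinuous G ∧ ∀ F, V F = G (M2 F)

/-!
Conjugating `F` by rotations `R₁, R₂ ∈ SO(2)` acts on the minors `(F, det F)` by a linear map of
`ℝ⁵`, since it is linear on the entries and leaves the determinant unchanged. Hence each
`F ↦ V (R₁ F R₂) = G (L_{R₁,R₂} (M2 F))` is an lsc convex function of the minors, and so is their
pointwise supremum `V_iso`. Isotropy of `V_iso` comes from `SO(2)` being a group, and `V_iso ≤ W`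
from `V ≤ W` and isotropy of `W`.
-/

lemma one_mem_SO (d : ℕ) : (1 : Mat d) ∈ SO d := ⟨by simp, by simp⟩

lemma mul_mem_SO {d : ℕ} {A B : Mat d} (hA : A ∈ SO d) (hB : B ∈ SO d) : A * B ∈ SO d := by
  refine ⟨?_, by rw [det_mul, hA.2, hB.2, one_mul]⟩
  calc A * B * (A * B)ᵀ = A * (B * Bᵀ) * Aᵀ := by simp only [transpose_mul, mul_assoc]
    _ = 1 := by rw [hB.1, mul_one, hA.1]

lemma transpose_mul_self_of_mem_SO {d : ℕ} {A : Mat d} (hA : A ∈ SO d) : Aᵀ * A = 1 :=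
  mul_eq_one_comm.mp hA.1

lemma transpose_mem_SO {d : ℕ} {A : Mat d} (hA : A ∈ SO d) : Aᵀ ∈ SO d :=
  ⟨by rw [transpose_transpose, transpose_mul_self_of_mem_SO hA], by rw [det_transpose, hA.2]⟩

section IsoEnvelope

variable {d : ℕ} {α : Type*} [CompleteLattice α]

def isoEnvelope (V : Mat d → α) (F : Mat d) : α :=
  ⨆ (R₁ : SO d) (R₂ : SO d), V (R₁ * F * R₂)

lemma sSup_rotations_eq_isoEnvelope (V : Mat d → α) (F : Mat d) :
    sSup {y | ∃ R₁ R₂ : Mat d, R₁ ∈ SO d ∧ R₂ ∈ SO d ∧ y = V (R₁ * F * R₂)} =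
      isoEnvelope V F := by
  refine le_antisymm (sSup_le ?_) (iSup₂_le fun R₁ R₂ => le_sSup ⟨R₁, R₂, R₁.2, R₂.2, rfl⟩)
  rintro _ ⟨R₁, R₂, h₁, h₂, rfl⟩
  exact le_iSup₂_of_le (f := fun (R₁ R₂ : SO d) => V (R₁ * F * R₂)) ⟨R₁, h₁⟩ ⟨R₂, h₂⟩ le_rfl

lemma le_isoEnvelope (V : Mat d → α) (F : Mat d) : V F ≤ isoEnvelope V F :=
  le_iSup₂_of_le (f := fun (R₁ R₂ : SO d) => V (R₁ * F * R₂)) ⟨1, one_mem_SO d⟩ ⟨1, one_mem_SO d⟩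
    (by simp)

lemma isoEnvelope_le_of_isotropic {V W : Mat d → α} (hW : Isotropic W) (hVW : ∀ F, V F ≤ W F)
    (F : Mat d) : isoEnvelope V F ≤ W F :=
  iSup₂_le fun R₁ R₂ => (hVW _).trans (hW F R₁ R₂ R₁.2 R₂.2).le

lemma isoEnvelope_mul_mul_le (V : Mat d → α) {Q₁ Q₂ : Mat d} (hQ₁ : Q₁ ∈ SO d) (hQ₂ : Q₂ ∈ SO d)
    (F : Mat d) : isoEnvelope V (Q₁ * F * Q₂) ≤ isoEnvelope V F := by
  refine iSup₂_le fun R₁ R₂ => ?_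
  rw [show (R₁ : Mat d) * (Q₁ * F * Q₂) * R₂ = R₁ * Q₁ * F * (Q₂ * R₂) by simp only [mul_assoc]]
  exact le_iSup₂_of_le (f := fun (R₁ R₂ : SO d) => V (R₁ * F * R₂))
    ⟨_, mul_mem_SO R₁.2 hQ₁⟩ ⟨_, mul_mem_SO hQ₂ R₂.2⟩ le_rfl

lemma isotropic_isoEnvelope (V : Mat d → α) : Isotropic (isoEnvelope V) := by
  intro F Q₁ Q₂ hQ₁ hQ₂
  refine le_antisymm (isoEnvelope_mul_mul_le V hQ₁ hQ₂ F) ?_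
  calc isoEnvelope V F = isoEnvelope V (Q₁ᵀ * (Q₁ * F * Q₂) * Q₂ᵀ) := by
        rw [← mul_assoc, ← mul_assoc, transpose_mul_self_of_mem_SO hQ₁, one_mul, mul_assoc,
          hQ₂.1, mul_one]
    _ ≤ isoEnvelope V (Q₁ * F * Q₂) :=
        isoEnvelope_mul_mul_le V (transpose_mem_SO hQ₁) (transpose_mem_SO hQ₂) _

end IsoEnvelope

section ConvexE

variable {E U : Type*} [AddCommGroup E] [Module ℝ E] [AddCommGroup U] [Module ℝ U]

lemma ConvexE.comp_linearMap {g : U → EReal} (hg : ConvexE g) (L : E →ₗ[ℝ] U) :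
    ConvexE (g ∘ L) := by
  intro x y a b ha hb hab
  simpa only [Function.comp_apply, map_add, map_smul] using hg (L x) (L y) a b ha hb hab

lemma ConvexE.iSup {ι : Sort*} {G : ι → E → EReal} (hG : ∀ i, ConvexE (G i)) :
    ConvexE fun x => ⨆ i, G i x := by
  intro x y a b ha hb hab
  refine iSup_le fun i => (hG i x y a b ha hb hab).trans (add_le_add ?_ ?_)
  · exact mul_le_mul_of_nonneg_left (le_iSup (G · x) i) (by exact_mod_cast ha)
  · exact mul_le_mul_of_nonneg_left (le_iSup (G · y) i) (by exact_mod_cast hb)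

end ConvexE

def rotateMinors (R₁ R₂ : Mat 2) : (Fin 5 → ℝ) →ₗ[ℝ] (Fin 5 → ℝ) where
  toFun x :=
    let F := R₁ * !![x 0, x 1; x 2, x 3] * R₂
    ![F 0 0, F 0 1, F 1 0, F 1 1, x 4]
  map_add' x y := by
    funext j
    fin_cases j <;> simp [mul_apply, Fin.sum_univ_two] <;> ring
  map_smul' c x := by
    funext j
    fin_cases j <;> simp [mul_apply, Fin.sum_univ_two] <;> ring

lemma rotateMinors_M2 {R₁ R₂ : Mat 2} (h₁ : R₁ ∈ SO 2) (h₂ : R₂ ∈ SO 2) (F : Mat 2) :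
    rotateMinors R₁ R₂ (M2 F) = M2 (R₁ * F * R₂) := by
  have hF : !![F 0 0, F 0 1; F 1 0, F 1 1] = F := (eta_fin_two F).symm
  funext j
  fin_cases j <;> simp [rotateMinors, M2, hF, det_mul, h₁.2, h₂.2]

lemma exists_isoEnvelope_eq_iSup_minors {V : Mat 2 → EReal} (hV : LscPolyconvex V) :
    ∃ (ι : Type) (_ : Nonempty ι) (G : ι → (Fin 5 → ℝ) → EReal),
      (∀ i, ConvexE (G i) ∧ LowerSemicontinuous (G i)) ∧
      ∀ F, isoEnvelope V F = ⨆ i, G i (M2 F) := by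
  obtain ⟨G, hGc, hGl, hVG⟩ := hV
  refine ⟨SO 2 × SO 2, ⟨⟨1, one_mem_SO 2⟩, ⟨1, one_mem_SO 2⟩⟩,
    fun R => G ∘ rotateMinors R.1 R.2, fun R => ⟨hGc.comp_linearMap _, ?_⟩, fun F => ?_⟩
  · exact hGl.comp (rotateMinors R.1 R.2).continuous_of_finiteDimensional
  · simp only [isoEnvelope, iSup_prod, Function.comp_apply, hVG]
    exact iSup_congr fun R₁ => iSup_congr fun R₂ => by rw [rotateMinors_M2 R₁.2 R₂.2]

lemma lscPolyconvex_of_eq_iSup {ι : Sort*} {V : Mat 2 → EReal} {G : ι → (Fin 5 → ℝ) → EReal}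
    (hG : ∀ i, ConvexE (G i) ∧ LowerSemicontinuous (G i)) (hV : ∀ F, V F = ⨆ i, G i (M2 F)) :
    LscPolyconvex V :=
  ⟨fun x => ⨆ i, G i x, ConvexE.iSup fun i => (hG i).1,
    lowerSemicontinuous_iSup fun i => (hG i).2, hV⟩

/-- If `W` is isotropic and `V` is lsc-polyconvex with `V ≤ W`, then
`V_iso(F) := sup_{R₁,R₂ ∈ SO} V(R₁ F R₂)` is isotropic, `V ≤ V_iso ≤ W`,
and `V_iso` is a supremum of lsc convex functions composed with the minors map,
hence lsc-polyconvex. -/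
theorem stmt4 (W V : Mat 2 → EReal) (hW : Isotropic W) (hV : LscPolyconvex V)
    (hVW : ∀ F, V F ≤ W F) :
    let Viso : Mat 2 → EReal := fun F =>
      sSup {y | ∃ R₁ R₂ : Mat 2, R₁ ∈ SO 2 ∧ R₂ ∈ SO 2 ∧ y = V (R₁ * F * R₂)}
    Isotropic Viso ∧ (∀ F, V F ≤ Viso F) ∧ (∀ F, Viso F ≤ W F) ∧
    (∃ (ι : Type) (_ : Nonempty ι) (G : ι → (Fin 5 → ℝ) → EReal),
      (∀ i, ConvexE (G i) ∧ LowerSemicontinuous (G i)) ∧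
      ∀ F, Viso F = ⨆ i, G i (M2 F)) ∧
    LscPolyconvex Viso := by
  intro Viso
  have hViso : Viso = isoEnvelope V := funext (sSup_rotations_eq_isoEnvelope V)
  clear_value Viso
  subst hViso
  obtain ⟨ι, hι, G, hG, hVG⟩ := exists_isoEnvelope_eq_iSup_minors hV
  exact ⟨isotropic_isoEnvelope V, le_isoEnvelope V, isoEnvelope_le_of_isotropic hW hVW,
    ⟨ι, hι, G, hG, hVG⟩, lscPolyconvex_of_eq_iSup hG hVG⟩
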